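/- Let g, h, p be nonnegative functions on [a,b] such that h, p both belong to D₊[a,b] (or both to D₋[a,b]), g is continuous, p is decreasing, and h and g·p are increasing on [a,b]. Let n ∈ ℕ with n ≥ 2, let ν ∈ {2,…,n} and α ≤ n/(n-1), and let f be a strictly positive, (n-1)-times differentiable function on [a,b] with f⁽ⁱ⁾ ≥ 0 for i = 1,…,n-1 and (n+1-α)·f⁽ⁿ⁻¹⁾·f^{n(1-α)} ≥ n!·h·p^{ν} on [a,b]. Set M := inf{g(x) : x ∈ [a,b]} and K := f(a)^{n+1} if α ≥ 0, K := f(a)^{n+1-α}·f(b)^{α} if α < 0. Then (b-a)·K·Mⁿ·h(a)^{n-1}·p(b)^{n-ν} + (∫_a^b f^{α}·g·h·p)ⁿ ≤ ∫_a^b f^{n+1}·gⁿ·h^{n-1}·p^{n-ν}. -/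

import Mathlib

/-!
Put `u x = ∫ t in a..x, f t ^ α * g t * h t * p t`. Integrating the growth condition
`h p^ν ≤ c f^{n(1-α)} f^{(n-1)}` (with `c = (n+1-α)/n!`) `n - 2` times, and pulling the increasing
weights `g p`, `h`, `f^{…}` and the decreasing weight `p^ν` out at the right endpoint each time,
gives `h u^m p^ν ≤ m! c (g p h)^m f^{n(1-α)+mα} f^{(n-1-m)}`. One more integration, now exact since
`f^{n-α} f' = (f^{n+1-α})' / (n+1-α)`, yields
`n u^{n-1} p^ν ≤ (g p)^{n-1} h^{n-2} (f^{n+1-α} - f(a)^{n+1-α})`.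
Multiplying by `u' = f^α g h p` and bounding `f(a)^{n+1-α} f^α ≥ K` and the weights from below by
`M`, `h(a)`, `p(b)` gives `(u^n)' + K M^n h(a)^{n-1} p(b)^{n-ν} ≤ f^{n+1} g^n h^{n-1} p^{n-ν}`,
which integrates to the claim. The derivatives `f^{(j)}` are not assumed integrable, so every
integration is done by comparing derivatives.
-/

/-- `D₊[a,b]`: continuous functions on `[a,b]` having a right-derivative at every
point of `(a,b)`. -/
def DPlus (a b : ℝ) (h : ℝ → ℝ) : Prop :=
  ContinuousOn h (Set.Icc a b) ∧ ∀ x ∈ Set.Ioo a b, ∃ L : ℝ, HasDerivWithinAt h L (Set.Ioi x) x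

/-- `D₋[a,b]`: continuous functions on `[a,b]` having a left-derivative at every
point of `(a,b)`. -/
def DMinus (a b : ℝ) (h : ℝ → ℝ) : Prop :=
  ContinuousOn h (Set.Icc a b) ∧ ∀ x ∈ Set.Ioo a b, ∃ L : ℝ, HasDerivWithinAt h L (Set.Iio x) x

open Set MeasureTheory

theorem monotoneOn_Icc_of_hasDerivAt_nonneg {a b : ℝ} {F F' : ℝ → ℝ}
    (hF : ContinuousOn F (Icc a b)) (hF' : ∀ x ∈ Ioo a b, HasDerivAt F (F' x) x)
    (hF'0 : ∀ x ∈ Ioo a b, 0 ≤ F' x) : MonotoneOn F (Icc a b) :=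
  monotoneOn_of_hasDerivWithinAt_nonneg (convex_Icc a b) hF
    (fun x hx => (hF' x (by rwa [interior_Icc] at hx)).hasDerivWithinAt)
    (fun x hx => hF'0 x (by rwa [interior_Icc] at hx))

theorem image_le_of_hasDerivAt_le {a b : ℝ} (hab : a ≤ b) {F G F' G' : ℝ → ℝ}
    (hF : ContinuousOn F (Icc a b)) (hG : ContinuousOn G (Icc a b))
    (hF' : ∀ x ∈ Ioo a b, HasDerivAt F (F' x) x) (hG' : ∀ x ∈ Ioo a b, HasDerivAt G (G' x) x)
    (ha : F a ≤ G a) (hle : ∀ x ∈ Ioo a b, F' x ≤ G' x) : F b ≤ G b := by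
  have hmono := monotoneOn_Icc_of_hasDerivAt_nonneg (hG.sub hF)
    (fun x hx => (hG' x hx).sub (hF' x hx)) (fun x hx => sub_nonneg.2 (hle x hx))
  have := hmono (left_mem_Icc.2 hab) (right_mem_Icc.2 hab) hab
  simp only [Pi.sub_apply] at this
  linarith

theorem hasDerivAt_integral_of_continuousOn {a b x : ℝ} {φ : ℝ → ℝ}
    (hφ : ContinuousOn φ (Icc a b)) (hx : x ∈ Ioo a b) :
    HasDerivAt (fun y => ∫ t in a..y, φ t) (φ x) x :=
  intervalIntegral.integral_hasDerivAt_right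
    ((hφ.mono (Icc_subset_Icc le_rfl hx.2.le)).intervalIntegrable_of_Icc hx.1.le)
    ((hφ.mono Ioo_subset_Icc_self).stronglyMeasurableAtFilter isOpen_Ioo x hx)
    ((hφ.continuousWithinAt (Ioo_subset_Icc_self hx)).continuousAt (Icc_mem_nhds hx.1 hx.2))

theorem continuousOn_primitive_Icc {a b : ℝ} (hab : a ≤ b) {φ : ℝ → ℝ}
    (hφ : ContinuousOn φ (Icc a b)) : ContinuousOn (fun y => ∫ t in a..y, φ t) (Icc a b) := by
  have hint : IntegrableOn φ (uIcc a b) := by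
    rw [uIcc_of_le hab]
    exact hφ.integrableOn_Icc
  simpa only [uIcc_of_le hab] using intervalIntegral.continuousOn_primitive_interval hint

theorem hasDerivAt_iteratedDerivWithin_Icc {a b x : ℝ} {f : ℝ → ℝ} {j : ℕ}
    (hf : DifferentiableOn ℝ (iteratedDerivWithin j f (Icc a b)) (Icc a b)) (hx : x ∈ Ioo a b) :
    HasDerivAt (iteratedDerivWithin j f (Icc a b))
      (iteratedDerivWithin (j + 1) f (Icc a b) x) x := by
  have hnhds : Icc a b ∈ nhds x := Icc_mem_nhds hx.1 hx.2
  rw [iteratedDerivWithin_succ, derivWithin_of_mem_nhds hnhds]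
  exact ((hf x (Ioo_subset_Icc_self hx)).differentiableAt hnhds).hasDerivAt

theorem mul_one_sub_add_mul_nonneg {n i : ℕ} (hn : 2 ≤ n) (hi : 0 < i) (hin : i ≤ n) {α : ℝ}
    (hα : α ≤ (n : ℝ) / ((n : ℝ) - 1)) : 0 ≤ n * (1 - α) + i * α := by
  have hn : (2 : ℝ) ≤ n := by exact_mod_cast hn
  have hi : (1 : ℝ) ≤ i := by exact_mod_cast hi
  have hin : (i : ℝ) ≤ n := by exact_mod_cast hin
  rw [le_div_iff₀ (by linarith)] at hα
  rcases le_or_gt 0 α with hα0 | hα0 <;> nlinarith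

structure WeightedPrimitive (a b α : ℝ) (f w h q u : ℝ → ℝ) : Prop where
  f_pos : ∀ x ∈ Icc a b, 0 < f x
  f_mono : MonotoneOn f (Icc a b)
  w_nonneg : ∀ x ∈ Icc a b, 0 ≤ w x
  w_mono : MonotoneOn w (Icc a b)
  h_nonneg : ∀ x ∈ Icc a b, 0 ≤ h x
  h_mono : MonotoneOn h (Icc a b)
  q_nonneg : ∀ x ∈ Icc a b, 0 ≤ q x
  q_anti : AntitoneOn q (Icc a b)
  u_cont : ContinuousOn u (Icc a b)
  u_left : u a = 0
  hasDerivAt_u : ∀ x ∈ Ioo a b, HasDerivAt u (f x ^ α * w x * h x) x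

namespace WeightedPrimitive

variable {a b α : ℝ} {f w h q u : ℝ → ℝ}

theorem of_integral (hab : a ≤ b) {g p : ℝ → ℝ} {ν : ℕ} (hf_pos : ∀ x ∈ Icc a b, 0 < f x)
    (hf_mono : MonotoneOn f (Icc a b)) (hf : ContinuousOn f (Icc a b))
    (hg_nonneg : ∀ x ∈ Icc a b, 0 ≤ g x) (hg : ContinuousOn g (Icc a b))
    (hh_nonneg : ∀ x ∈ Icc a b, 0 ≤ h x) (hh_mono : MonotoneOn h (Icc a b))
    (hh : ContinuousOn h (Icc a b)) (hp_nonneg : ∀ x ∈ Icc a b, 0 ≤ p x)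
    (hp_anti : AntitoneOn p (Icc a b)) (hp : ContinuousOn p (Icc a b))
    (hgp_mono : MonotoneOn (fun x => g x * p x) (Icc a b)) :
    WeightedPrimitive a b α f (fun x => g x * p x) h (fun x => p x ^ ν)
      (fun y => ∫ x in a..y, f x ^ α * g x * h x * p x) := by
  have hφ : ContinuousOn (fun x => f x ^ α * g x * h x * p x) (Icc a b) :=
    (((hf.rpow_const fun x hx => Or.inl (hf_pos x hx).ne').mul hg).mul hh).mul hp
  exact
    { f_pos := hf_pos
      f_mono := hf_mono
      w_nonneg := fun x hx => mul_nonneg (hg_nonneg x hx) (hp_nonneg x hx)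
      w_mono := hgp_mono
      h_nonneg := hh_nonneg
      h_mono := hh_mono
      q_nonneg := fun x hx => pow_nonneg (hp_nonneg x hx) ν
      q_anti := fun x hx y hy hxy => pow_le_pow_left₀ (hp_nonneg y hy) (hp_anti hx hy hxy) ν
      u_cont := continuousOn_primitive_Icc hab hφ
      u_left := intervalIntegral.integral_same
      hasDerivAt_u := fun x hx =>
        (hasDerivAt_integral_of_continuousOn hφ hx).congr_deriv (by ring) }

theorem u_nonneg (S : WeightedPrimitive a b α f w h q u) {x : ℝ} (hx : x ∈ Icc a b) :
    0 ≤ u x := by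
  have hmono := monotoneOn_Icc_of_hasDerivAt_nonneg S.u_cont S.hasDerivAt_u fun y hy => by
    have hy := Ioo_subset_Icc_self hy
    have := S.f_pos y hy
    have := S.w_nonneg y hy
    have := S.h_nonneg y hy
    positivity
  simpa [S.u_left] using hmono (left_mem_Icc.2 (hx.1.trans hx.2)) hx hx.1

theorem deriv_pow_mul_le (S : WeightedPrimitive a b α f w h q u) {m : ℕ} {K γ e s z : ℝ}
    (hs : s ∈ Icc a b) (hz : z ∈ Icc a b) (hsz : s ≤ z) (hK : 0 ≤ K) (he : 0 ≤ e)
    (hbound : h s * u s ^ m * q s ≤ K * (w s * h s) ^ m * f s ^ γ * e) :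
    (m + 1) * u s ^ m * (f s ^ α * w s * h s) * q z ≤
      (m + 1) * K * (w z ^ (m + 1) * h z ^ m) * (f s ^ (γ + α) * e) := by
  have hfs := S.f_pos s hs
  have hws := S.w_nonneg s hs
  have hhs := S.h_nonneg s hs
  have hus := S.u_nonneg hs
  calc (m + 1) * u s ^ m * (f s ^ α * w s * h s) * q z
      ≤ (m + 1) * f s ^ α * w s * (h s * u s ^ m * q s) := by
        have := S.q_anti hs hz hsz
        have : 0 ≤ (m + 1) * u s ^ m * (f s ^ α * w s * h s) := by positivity
        nlinarith
    _ ≤ (m + 1) * f s ^ α * w s * (K * (w s * h s) ^ m * f s ^ γ * e) := by gcongr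
    _ = (m + 1) * K * (w s ^ (m + 1) * h s ^ m) * (f s ^ (γ + α) * e) := by
        rw [Real.rpow_add hfs]; ring
    _ ≤ (m + 1) * K * (w z ^ (m + 1) * h z ^ m) * (f s ^ (γ + α) * e) := by
        have := S.w_mono hs hz hsz
        have := S.h_mono hs hz hsz
        have := S.w_nonneg z hz
        gcongr

theorem mul_pow_succ_mul_le (S : WeightedPrimitive a b α f w h q u) {m : ℕ} {K γ : ℝ} {E E' : ℝ → ℝ}
    (hE : ContinuousOn E (Icc a b)) (hE' : ∀ x ∈ Ioo a b, HasDerivAt E (E' x) x)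
    (hEa : 0 ≤ E a) (hE'0 : ∀ x ∈ Icc a b, 0 ≤ E' x) (hK : 0 ≤ K) (hγ : 0 ≤ γ + α)
    (hbound : ∀ x ∈ Icc a b, h x * u x ^ m * q x ≤ K * (w x * h x) ^ m * f x ^ γ * E' x)
    {z : ℝ} (hz : z ∈ Icc a b) :
    h z * u z ^ (m + 1) * q z ≤
      ((m + 1) * K) * (w z * h z) ^ (m + 1) * f z ^ (γ + α) * E z := by
  have hsub : Icc a z ⊆ Icc a b := Icc_subset_Icc le_rfl hz.2
  have hsub' : Ioo a z ⊆ Ioo a b := Ioo_subset_Ioo le_rfl hz.2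
  have hwz := S.w_nonneg z hz
  have hhz := S.h_nonneg z hz
  have hfz := S.f_pos z hz
  set C := (m + 1) * K * (w z ^ (m + 1) * h z ^ m) * f z ^ (γ + α)
  have hC : 0 ≤ C := by positivity
  have key : u z ^ (m + 1) * q z ≤ C * E z := by
    refine image_le_of_hasDerivAt_le (F := fun t => u t ^ (m + 1) * q z)
      (G := fun t => C * E t) hz.1 ((S.u_cont.mono hsub).pow _ |>.mul continuousOn_const)
      (continuousOn_const.mul (hE.mono hsub))
      (fun t ht => ((S.hasDerivAt_u t (hsub' ht)).pow (m + 1)).mul_const (q z))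
      (fun t ht => (hE' t (hsub' ht)).const_mul C) ?_ ?_
    · simpa [S.u_left, zero_pow (Nat.succ_ne_zero m)] using mul_nonneg hC hEa
    · intro t ht
      have ht' := Ioo_subset_Icc_self (hsub' ht)
      have hE't := hE'0 t ht'
      have hft : f t ^ (γ + α) ≤ f z ^ (γ + α) :=
        Real.rpow_le_rpow (S.f_pos t ht').le (S.f_mono ht' hz ht.2.le) hγ
      simp only [Nat.cast_add, Nat.cast_one, add_tsub_cancel_right]
      calc ((m : ℝ) + 1) * u t ^ m * (f t ^ α * w t * h t) * q z
          ≤ (m + 1) * K * (w z ^ (m + 1) * h z ^ m) * (f t ^ (γ + α) * E' t) :=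
            S.deriv_pow_mul_le ht' hz ht.2.le hK hE't (hbound t ht')
        _ ≤ (m + 1) * K * (w z ^ (m + 1) * h z ^ m) * (f z ^ (γ + α) * E' t) := by gcongr
        _ = C * E' t := by ring
  calc h z * u z ^ (m + 1) * q z ≤ h z * (C * E z) := by rw [mul_assoc]; gcongr
    _ = _ := by simp only [C]; ring

theorem le_mul_rpow_sub_rpow (S : WeightedPrimitive a b α f w h q u) {m : ℕ} {K γ : ℝ}
    {f' : ℝ → ℝ} (hf : ContinuousOn f (Icc a b)) (hf' : ∀ x ∈ Ioo a b, HasDerivAt f (f' x) x)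
    (hf'0 : ∀ x ∈ Icc a b, 0 ≤ f' x) (hK : 0 ≤ K) (hr : 0 < γ + α + 1)
    (hbound : ∀ x ∈ Icc a b, h x * u x ^ m * q x ≤ K * (w x * h x) ^ m * f x ^ γ * f' x)
    {z : ℝ} (hz : z ∈ Icc a b) :
    (γ + α + 1) * (u z ^ (m + 1) * q z) ≤
      (m + 1) * K * (w z ^ (m + 1) * h z ^ m) * (f z ^ (γ + α + 1) - f a ^ (γ + α + 1)) := by
  have hsub : Icc a z ⊆ Icc a b := Icc_subset_Icc le_rfl hz.2
  have hsub' : Ioo a z ⊆ Ioo a b := Ioo_subset_Ioo le_rfl hz.2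
  have hwz := S.w_nonneg z hz
  have hhz := S.h_nonneg z hz
  set r := γ + α + 1
  set C := (m + 1) * K * (w z ^ (m + 1) * h z ^ m)
  have hC : 0 ≤ C := by positivity
  refine image_le_of_hasDerivAt_le (F := fun t => r * (u t ^ (m + 1) * q z))
    (G := fun t => C * (f t ^ r - f a ^ r)) hz.1
    (continuousOn_const.mul ((S.u_cont.mono hsub).pow _ |>.mul continuousOn_const))
    (continuousOn_const.mul (((hf.mono hsub).rpow_const
      fun x hx => Or.inl (S.f_pos x (hsub hx)).ne').sub continuousOn_const))
    (fun t ht => (((S.hasDerivAt_u t (hsub' ht)).pow (m + 1)).mul_const (q z)).const_mul r)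
    (fun t ht => (((hf' t (hsub' ht)).rpow_const
      (Or.inl (S.f_pos t (hsub (Ioo_subset_Icc_self ht))).ne')).sub_const _).const_mul C) ?_ ?_
  · simp [S.u_left]
  · intro t ht
    have ht' := Ioo_subset_Icc_self (hsub' ht)
    have hbd := S.deriv_pow_mul_le ht' hz ht.2.le hK (hf'0 t ht') (hbound t ht')
    have hr1 : r - 1 = γ + α := by simp only [r]; ring
    simp only [Nat.cast_add, Nat.cast_one, add_tsub_cancel_right, hr1]
    calc r * (((m : ℝ) + 1) * u t ^ m * (f t ^ α * w t * h t) * q z)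
        ≤ r * (C * (f t ^ (γ + α) * f' t)) := by gcongr
      _ = C * (f' t * r * f t ^ (γ + α)) := by ring

open Nat in
theorem mul_pow_mul_le_of_growth (S : WeightedPrimitive a b α f w h q u) {N : ℕ} {β c : ℝ}
    {D : ℕ → ℝ → ℝ}
    (hD : ∀ j, 0 < j → j < N →
      ContinuousOn (D j) (Icc a b) ∧ ∀ x ∈ Ioo a b, HasDerivAt (D j) (D (j + 1) x) x)
    (hD_nonneg : ∀ j, 0 < j → j ≤ N → ∀ x ∈ Icc a b, 0 ≤ D j x) (hc : 0 ≤ c)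
    (hβ : ∀ i : ℕ, 0 < i → i < N → 0 ≤ β + i * α)
    (hgrowth : ∀ x ∈ Icc a b, h x * q x ≤ c * f x ^ β * D N x) :
    ∀ m j, m + j = N → 0 < j → ∀ x ∈ Icc a b,
      h x * u x ^ m * q x ≤ (m ! * c) * (w x * h x) ^ m * f x ^ (β + m * α) * D j x := by
  intro m
  induction m with
  | zero =>
    intro j hj _ x hx
    simpa [← hj] using hgrowth x hx
  | succ m ih =>
    intro j hj hj0 x hx
    have hγ : 0 ≤ β + m * α + α := by
      have := hβ (m + 1) m.succ_pos (by omega)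
      push_cast at this
      linarith
    have hstep := S.mul_pow_succ_mul_le (hD j hj0 (by omega)).1 (hD j hj0 (by omega)).2
      (hD_nonneg j hj0 (by omega) a (left_mem_Icc.2 (hx.1.trans hx.2)))
      (hD_nonneg (j + 1) j.succ_pos (by omega)) (by positivity) hγ
      (ih (j + 1) (by omega) j.succ_pos) hx
    convert hstep using 3
    · rw [factorial_succ]
      push_cast
      ring
    · congr 1
      push_cast
      ring

open Nat in
theorem natCast_mul_pow_mul_le_of_growth (S : WeightedPrimitive a b α f w h q u) {n : ℕ}
    (hn : 2 ≤ n) {D : ℕ → ℝ → ℝ} (hD0 : D 0 = f)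
    (hD : ∀ j < n - 1,
      ContinuousOn (D j) (Icc a b) ∧ ∀ x ∈ Ioo a b, HasDerivAt (D j) (D (j + 1) x) x)
    (hD_nonneg : ∀ j, 1 ≤ j → j ≤ n - 1 → ∀ x ∈ Icc a b, 0 ≤ D j x)
    (hα : α ≤ (n : ℝ) / ((n : ℝ) - 1))
    (hgrowth : ∀ x ∈ Icc a b,
      (n ! : ℝ) * h x * q x ≤ ((n : ℝ) + 1 - α) * D (n - 1) x * f x ^ ((n : ℝ) * (1 - α)))
    {z : ℝ} (hz : z ∈ Icc a b) :
    n * u z ^ (n - 1) * q z ≤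
      w z ^ (n - 1) * h z ^ (n - 2) * (f z ^ ((n : ℝ) + 1 - α) - f a ^ ((n : ℝ) + 1 - α)) := by
  have hβ : ∀ i : ℕ, 0 < i → i ≤ n → 0 ≤ n * (1 - α) + i * α :=
    fun i hi hin => mul_one_sub_add_mul_nonneg hn hi hin hα
  obtain ⟨k, rfl⟩ : ∃ k, n = k + 2 := ⟨n - 2, by omega⟩
  simp only [show k + 2 - 1 = k + 1 by omega, Nat.add_sub_cancel] at hD hD_nonneg hgrowth ⊢
  push_cast at hβ hgrowth ⊢
  have hr : 0 < (k : ℝ) + 2 + 1 - α := by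
    have := hβ (k + 1) k.succ_pos (by omega)
    push_cast at this
    linarith
  set c := ((k : ℝ) + 2 + 1 - α) / (k + 2)!
  have hc : 0 ≤ c := by positivity
  have hgrowth' : ∀ x ∈ Icc a b,
      h x * q x ≤ c * f x ^ ((k + 2 : ℝ) * (1 - α)) * D (k + 1) x := by
    intro x hx
    have := hgrowth x hx
    rw [div_mul_eq_mul_div, div_mul_eq_mul_div, le_div_iff₀ (by positivity)]
    linarith
  have hbound := S.mul_pow_mul_le_of_growth (fun j _ hj => hD j hj)
    (fun j hj0 hj => hD_nonneg j hj0 hj) hc (fun i hi hik => hβ i hi (by omega)) hgrowth' k 1 rfl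
    one_pos
  have hfin := S.le_mul_rpow_sub_rpow (hD0 ▸ (hD 0 k.succ_pos).1) (hD0 ▸ (hD 0 k.succ_pos).2)
    (hD_nonneg 1 le_rfl (by omega)) (by positivity) (by linarith) hbound hz
  have hexp : (k + 2 : ℝ) * (1 - α) + k * α + α + 1 = k + 2 + 1 - α := by ring
  have hcoef : ((k : ℝ) + 1) * (k ! * c) = ((k : ℝ) + 2 + 1 - α) / (k + 2) := by
    simp only [c, factorial_succ]
    push_cast
    field_simp
    ring
  rw [hexp, hcoef] at hfin
  refine le_of_mul_le_mul_left ?_ hr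
  calc ((k : ℝ) + 2 + 1 - α) * ((k + 2) * u z ^ (k + 1) * q z)
      = (k + 2) * (((k : ℝ) + 2 + 1 - α) * (u z ^ (k + 1) * q z)) := by ring
    _ ≤ (k + 2) * (((k : ℝ) + 2 + 1 - α) / (k + 2) * (w z ^ (k + 1) * h z ^ k) *
        (f z ^ ((k : ℝ) + 2 + 1 - α) - f a ^ ((k : ℝ) + 2 + 1 - α))) := by gcongr
    _ = _ := by field_simp

end WeightedPrimitive

theorem add_pow_le_integral {a b C : ℝ} (hab : a ≤ b) {n : ℕ} (hn : n ≠ 0) {u φ Ψ : ℝ → ℝ}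
    (hu : ContinuousOn u (Icc a b)) (hu0 : u a = 0)
    (hu' : ∀ x ∈ Ioo a b, HasDerivAt u (φ x) x) (hΨ : ContinuousOn Ψ (Icc a b))
    (hle : ∀ x ∈ Ioo a b, n * u x ^ (n - 1) * φ x + C ≤ Ψ x) :
    (b - a) * C + u b ^ n ≤ ∫ x in a..b, Ψ x := by
  refine image_le_of_hasDerivAt_le (F := fun t => (t - a) * C + u t ^ n)
    (G := fun t => ∫ s in a..t, Ψ s) hab
    (((continuousOn_id.sub continuousOn_const).mul continuousOn_const).add (hu.pow n))
    (continuousOn_primitive_Icc hab hΨ)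
    (fun x hx => (((hasDerivAt_id x).sub_const a).mul_const C).add ((hu' x hx).pow n))
    (fun x hx => hasDerivAt_integral_of_continuousOn hΨ hx) ?_ ?_
  · simp [hu0, hn]
  · intro x hx
    simpa [add_comm] using hle x hx

theorem ite_le_rpow_mul_rpow {n : ℕ} {α x y z : ℝ} (hx : 0 < x) (hxy : x ≤ y) (hyz : y ≤ z) :
    (if 0 ≤ α then x ^ (n + 1) else x ^ ((n : ℝ) + 1 - α) * z ^ α) ≤
      x ^ ((n : ℝ) + 1 - α) * y ^ α := by
  split_ifs with hα
  · calc x ^ (n + 1) = x ^ ((n : ℝ) + 1 - α) * x ^ α := by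
          rw [← Real.rpow_add hx, sub_add_cancel]
          norm_cast
      _ ≤ x ^ ((n : ℝ) + 1 - α) * y ^ α := by gcongr
  · exact mul_le_mul_of_nonneg_left
      (Real.rpow_le_rpow_of_nonpos (hx.trans_le hxy) hyz (le_of_not_ge hα)) (by positivity)

theorem mul_pow_mul_add_le {n ν : ℕ} (hn : 2 ≤ n) (hν : 1 ≤ ν) (hνn : ν ≤ n)
    {U F F₀ G G₀ H H₀ P P₀ α K : ℝ} (hF₀ : 0 < F₀) (hF₀F : F₀ ≤ F) (hα : α ≤ n + 1)
    (hG₀ : 0 ≤ G₀) (hG₀G : G₀ ≤ G) (hH₀ : 0 ≤ H₀) (hH₀H : H₀ ≤ H) (hP₀ : 0 ≤ P₀) (hP₀P : P₀ ≤ P)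
    (hK : K ≤ F₀ ^ ((n : ℝ) + 1 - α) * F ^ α)
    (hbound : n * U ^ (n - 1) * P ^ ν ≤
      (G * P) ^ (n - 1) * H ^ (n - 2) * (F ^ ((n : ℝ) + 1 - α) - F₀ ^ ((n : ℝ) + 1 - α))) :
    n * U ^ (n - 1) * (F ^ α * (G * P) * H) + K * (G₀ ^ n * H₀ ^ (n - 1) * P₀ ^ (n - ν)) ≤
      F ^ (n + 1) * G ^ n * H ^ (n - 1) * P ^ (n - ν) := by
  have hF : 0 < F := hF₀.trans_le hF₀F
  have hG : 0 ≤ G := hG₀.trans hG₀G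
  have hH : 0 ≤ H := hH₀.trans hH₀H
  have hP : 0 ≤ P := hP₀.trans hP₀P
  set r : ℝ := (n : ℝ) + 1 - α
  set Q := G₀ ^ n * H₀ ^ (n - 1) * P₀ ^ (n - ν)
  set X := G ^ n * H ^ (n - 1) * P ^ (n - ν)
  have hQ : 0 ≤ Q := by positivity
  have hQX : Q ≤ X := by simp only [Q, X]; gcongr
  have hFr : F ^ r * F ^ α = F ^ (n + 1) := by
    rw [← Real.rpow_add hF, sub_add_cancel]
    norm_cast
  have hF₀r : F₀ ^ r ≤ F ^ r := Real.rpow_le_rpow hF₀.le hF₀F (by simp only [r]; linarith)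
  have hmain : n * U ^ (n - 1) * (F ^ α * (G * P) * H) ≤ (F ^ r - F₀ ^ r) * F ^ α * X := by
    rcases hP.eq_or_lt with rfl | hP
    · simp only [mul_zero, zero_mul]
      have : 0 ≤ F ^ r - F₀ ^ r := sub_nonneg.2 hF₀r
      positivity
    · have hPν : P ^ ν = P ^ (ν - 1) * P := by rw [← pow_succ]; congr 1; omega
      have hPn : P ^ (n - 1) = P ^ (n - ν) * P ^ (ν - 1) := by rw [← pow_add]; congr 1; omega
      have hHn : H ^ (n - 1) = H ^ (n - 2) * H := by rw [← pow_succ]; congr 1; omega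
      have hGn : G ^ n = G ^ (n - 1) * G := by rw [← pow_succ]; congr 1; omega
      refine le_of_mul_le_mul_right ?_ (pow_pos hP (ν - 1))
      calc n * U ^ (n - 1) * (F ^ α * (G * P) * H) * P ^ (ν - 1)
          = n * U ^ (n - 1) * P ^ ν * (F ^ α * G * H) := by rw [hPν]; ring
        _ ≤ (G * P) ^ (n - 1) * H ^ (n - 2) * (F ^ r - F₀ ^ r) * (F ^ α * G * H) := by gcongr
        _ = (F ^ r - F₀ ^ r) * F ^ α * X * P ^ (ν - 1) := by
          simp only [X]; rw [hGn, hHn, mul_pow, hPn]; ring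
  have hKQ : K * Q ≤ F₀ ^ r * F ^ α * X := mul_le_mul hK hQX hQ (by positivity)
  calc n * U ^ (n - 1) * (F ^ α * (G * P) * H) + K * Q
      ≤ (F ^ r - F₀ ^ r) * F ^ α * X + F₀ ^ r * F ^ α * X := add_le_add hmain hKQ
    _ = F ^ (n + 1) * G ^ n * H ^ (n - 1) * P ^ (n - ν) := by rw [← hFr]; ring

theorem stmt1 (a b : ℝ) (hab : a < b) (n : ℕ) (hn : 2 ≤ n)
    (g h p : ℝ → ℝ)
    (hg_nonneg : ∀ x ∈ Set.Icc a b, 0 ≤ g x)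
    (hh_nonneg : ∀ x ∈ Set.Icc a b, 0 ≤ h x)
    (hp_nonneg : ∀ x ∈ Set.Icc a b, 0 ≤ p x)
    (hD : (DPlus a b h ∧ DPlus a b p) ∨ (DMinus a b h ∧ DMinus a b p))
    (hg_cont : ContinuousOn g (Set.Icc a b))
    (hp_anti : AntitoneOn p (Set.Icc a b))
    (hh_mono : MonotoneOn h (Set.Icc a b))
    (hgp_mono : MonotoneOn (fun x => g x * p x) (Set.Icc a b))
    (ν : ℕ) (hν1 : 2 ≤ ν) (hν2 : ν ≤ n)
    (α : ℝ) (hα : α ≤ (n : ℝ) / ((n : ℝ) - 1))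
    (f : ℝ → ℝ) (hf_pos : ∀ x ∈ Set.Icc a b, 0 < f x)
    (hf_diff : ∀ i < n - 1,
      DifferentiableOn ℝ (iteratedDerivWithin i f (Set.Icc a b)) (Set.Icc a b))
    (hf_nonneg : ∀ i, 1 ≤ i → i ≤ n - 1 → ∀ x ∈ Set.Icc a b,
      0 ≤ iteratedDerivWithin i f (Set.Icc a b) x)
    (hgrowth : ∀ x ∈ Set.Icc a b,
      (n.factorial : ℝ) * h x * p x ^ ν ≤
        ((n : ℝ) + 1 - α) * iteratedDerivWithin (n - 1) f (Set.Icc a b) x *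
          f x ^ ((n : ℝ) * (1 - α))) :
    (b - a) *
        (if 0 ≤ α then f a ^ (n + 1) else f a ^ ((n : ℝ) + 1 - α) * f b ^ α) *
        sInf (g '' Set.Icc a b) ^ n * h a ^ (n - 1) * p b ^ (n - ν) +
      (∫ x in a..b, f x ^ α * g x * h x * p x) ^ n ≤
    ∫ x in a..b, f x ^ (n + 1) * g x ^ n * h x ^ (n - 1) * p x ^ (n - ν) := by
  have haI : a ∈ Icc a b := left_mem_Icc.2 hab.le
  have hbI : b ∈ Icc a b := right_mem_Icc.2 hab.le
  obtain ⟨hh_cont, hp_cont⟩ : ContinuousOn h (Icc a b) ∧ ContinuousOn p (Icc a b) := by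
    rcases hD with ⟨hh, hp⟩ | ⟨hh, hp⟩ <;> exact ⟨hh.1, hp.1⟩
  have hderiv := fun j (hj : j < n - 1) => And.intro (hf_diff j hj).continuousOn
    fun x (hx : x ∈ Ioo a b) => hasDerivAt_iteratedDerivWithin_Icc (hf_diff j hj) hx
  have hf_cont : ContinuousOn f (Icc a b) := by simpa using (hderiv 0 (by omega)).1
  have hf_mono : MonotoneOn f (Icc a b) :=
    monotoneOn_Icc_of_hasDerivAt_nonneg hf_cont (by simpa using (hderiv 0 (by omega)).2)
      fun x hx => hf_nonneg 1 le_rfl (by omega) x (Ioo_subset_Icc_self hx)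
  have S := WeightedPrimitive.of_integral (α := α) (ν := ν) hab.le hf_pos hf_mono hf_cont
    hg_nonneg hg_cont hh_nonneg hh_mono hh_cont hp_nonneg hp_anti hp_cont hgp_mono
  set M := sInf (g '' Icc a b)
  have hM : ∀ x ∈ Icc a b, M ≤ g x := fun x hx =>
    csInf_le ⟨0, by rintro _ ⟨y, hy, rfl⟩; exact hg_nonneg y hy⟩ ⟨x, hx, rfl⟩
  have hM0 : 0 ≤ M := Real.sInf_nonneg (by rintro _ ⟨y, hy, rfl⟩; exact hg_nonneg y hy)
  have hα' : α ≤ n + 1 := by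
    have hn : (2 : ℝ) ≤ n := by exact_mod_cast hn
    rw [le_div_iff₀ (by linarith)] at hα
    nlinarith
  have key := add_pow_le_integral hab.le (show n ≠ 0 by omega) S.u_cont S.u_left S.hasDerivAt_u
    (Ψ := fun x => f x ^ (n + 1) * g x ^ n * h x ^ (n - 1) * p x ^ (n - ν))
    ((((hf_cont.pow _).mul (hg_cont.pow _)).mul (hh_cont.pow _)).mul (hp_cont.pow _))
    fun x hx => by
      have hx := Ioo_subset_Icc_self hx
      exact mul_pow_mul_add_le hn (by omega) hν2 (hf_pos a haI) (hf_mono haI hx hx.1) hα'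
        hM0 (hM x hx) (hh_nonneg a haI) (hh_mono haI hx hx.1) (hp_nonneg b hbI)
        (hp_anti hx hbI hx.2)
        (ite_le_rpow_mul_rpow (hf_pos a haI) (hf_mono haI hx hx.1) (hf_mono hx hbI hx.2))
        (S.natCast_mul_pow_mul_le_of_growth hn (by simp) hderiv hf_nonneg hα hgrowth hx)
  calc _ = (b - a) * ((if 0 ≤ α then f a ^ (n + 1) else f a ^ ((n : ℝ) + 1 - α) * f b ^ α) *
        (M ^ n * h a ^ (n - 1) * p b ^ (n - ν))) +
        (∫ x in a..b, f x ^ α * g x * h x * p x) ^ n := by ring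
    _ ≤ _ := key
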